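/- arXiv:1508.05532 — 2 statements merged into one kernel-verified Lean document; each statement's English description precedes it below -/
import Mathlib

section
/- Let P be a partition of the edge set of the complete graph K_n into cliques (each part is the edge set of a complete subgraph on some vertex subset, and any two distinct vertices lie in exactly one part). Suppose there is a linear factorization (σ_a)_{a ∈ A} of the complete digraph with loops on the vertex set V (|A| = |V| = n) and a function h : P → A such that: (i) for each part p ∈ P with vertex set V_p, the permutation σ_{h(p)} maps V_p onto V_p (so its restriction F_p to V_p is a linear factor of the complete digraph with loops on V_p), and (ii) for distinct parts p ≠ q, the arc sets of F_p and F_q are disjoint. Then the coloring assigning color h(p) to all edges of part p is a proper coloring of the decomposition with at most n colors: intersecting parts receive distinct colors. In particular the chromatic index of the decomposition is at most n. -/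
/-- Main theorem: a clique decomposition of K_n admitting a compatible linear
factorization (via h : P → A with each σ_{h p} stabilizing V_p and the
restricted factors pairwise arc-disjoint) is properly colored by h; in
particular its chromatic index is at most n. -/
theorem stmt_6 {V A P : Type*} [Fintype V] [Fintype A] [Fintype P]
    [DecidableEq V] [DecidableEq A] {n : ℕ} (hn : Fintype.card V = n)
    (hcardA : Fintype.card A = n)
    (Vp : P → Finset V)
    (hsize : ∀ p : P, 2 ≤ (Vp p).card)
    (hcover : ∀ u v : V, u ≠ v → ∃! p : P, u ∈ Vp p ∧ v ∈ Vp p)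
    (σ : A → Equiv.Perm V)
    (hpart : ∀ x y : V, ∃! a : A, σ a x = y)
    (h : P → A)
    (hstab : ∀ p : P, (Vp p).image (σ (h p)) = Vp p)
    (hdisj : ∀ p q : P, p ≠ q →
      Disjoint ((Vp p).image (fun x => (x, σ (h p) x)))
               ((Vp q).image (fun x => (x, σ (h q) x)))) :
    (∀ p q : P, p ≠ q → ((Vp p) ∩ (Vp q)).Nonempty → h p ≠ h q) ∧
    ∃ c : P → Fin n, ∀ p q : P, p ≠ q → ((Vp p) ∩ (Vp q)).Nonempty →
      c p ≠ c q := by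
  have key : ∀ p q : P, p ≠ q → ((Vp p) ∩ (Vp q)).Nonempty → h p ≠ h q := by
    intro p q hpq ⟨x, hx⟩ heq
    rw [Finset.mem_inter] at hx
    have := hdisj p q hpq
    have hmem1 : (x, σ (h p) x) ∈ (Vp p).image (fun x => (x, σ (h p) x)) :=
      Finset.mem_image_of_mem _ hx.1
    have hmem2 : (x, σ (h p) x) ∈ (Vp q).image (fun x => (x, σ (h q) x)) := by
      rw [heq]; exact Finset.mem_image_of_mem _ hx.2
    exact Finset.disjoint_left.mp this hmem1 hmem2
  refine ⟨key, ?_⟩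
  let e : A ≃ Fin n := Fintype.equivFinOfCardEq hcardA
  refine ⟨fun p => e (h p), fun p q hpq hint hc => key p q hpq hint (e.injective hc)⟩
end

section
/- Let P be a clique decomposition of K_n with vertex set V, let (σ_a)_{a∈A} be a linear factorization of the complete digraph with loops on V, and let h : P → A be such that each σ_{h(p)} stabilizes V_p and the restricted factors F_p = {(x, σ_{h(p)}(x)) : x ∈ V_p} are pairwise disjoint. Then for each vertex v ∈ V, the map p ↦ (v, σ_{h(p)}(v)) is injective from the set of parts containing v into the arcs with tail v, and hence at most n parts contain any given vertex. -/
/-- Under the hypotheses of the main theorem, for each vertex v the map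
p ↦ (v, σ_{h p} v) is injective on parts containing v, and hence at most n
parts contain any given vertex. -/
theorem stmt_14 {V A P : Type*} [Fintype V] [Fintype A] [Fintype P]
    [DecidableEq V] [DecidableEq A] [DecidableEq P] {n : ℕ}
    (hn : Fintype.card V = n) (hcardA : Fintype.card A = n)
    (Vp : P → Finset V)
    (hsize : ∀ p : P, 2 ≤ (Vp p).card)
    (hcover : ∀ u v : V, u ≠ v → ∃! p : P, u ∈ Vp p ∧ v ∈ Vp p)
    (σ : A → Equiv.Perm V)
    (hpart : ∀ x y : V, ∃! a : A, σ a x = y)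
    (h : P → A)
    (hstab : ∀ p : P, (Vp p).image (σ (h p)) = Vp p)
    (hdisj : ∀ p q : P, p ≠ q →
      Disjoint ((Vp p).image (fun x => (x, σ (h p) x)))
               ((Vp q).image (fun x => (x, σ (h q) x))))
    (v : V) :
    (∀ p q : P, v ∈ Vp p → v ∈ Vp q →
      (v, σ (h p) v) = (v, σ (h q) v) → p = q) ∧
    (Finset.univ.filter (fun p : P => v ∈ Vp p)).card ≤ n := by
  have key : ∀ p q : P, v ∈ Vp p → v ∈ Vp q →
      (v, σ (h p) v) = (v, σ (h q) v) → p = q := by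
    intro p q hp hq heq
    by_contra hpq
    have := hdisj p q hpq
    rw [Finset.disjoint_left] at this
    exact this (Finset.mem_image_of_mem _ hp)
      (heq ▸ Finset.mem_image_of_mem (fun x => (x, σ (h q) x)) hq)
  refine ⟨key, ?_⟩
  calc (Finset.univ.filter (fun p : P => v ∈ Vp p)).card
      ≤ (Finset.univ : Finset V).card := by
        apply Finset.card_le_card_of_injOn (fun p => σ (h p) v)
        · intro _ _; exact Finset.mem_univ _
        · intro p hp q hq heq
          simp only [Finset.mem_coe, Finset.mem_filter] at hp hq
          exact key p q hp.2 hq.2 (by simp [heq])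
    _ = n := by simp [hn]
end
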